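/- With R distributed as the truncated nearest-neighbor distance f_R(r) = 2πλ r e^{−πλ r²}/(1 − e^{−πλ R_M²}) on [0, R_M], and the uplink transmit power P_u = ρ R^η (channel inversion power control), the fractional moment satisfies E[P_u^{2/η}] = ρ^{2/η} γ(2, πλ R_M²) / (πλ (1 − e^{−πλ R_M²})), where γ is the lower incomplete gamma function. -/

import Mathlib

open MeasureTheory Real Set

/-!
The substitution `t = πλ r²` turns the density `2πλ r e^{−πλ r²} dr` into `e^{−t} dt` and
`P_u^{2/η} = ρ^{2/η} r²` into `ρ^{2/η} t / (πλ)`, so the integral over `[0, R_M]` is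
`ρ^{2/η} γ(2, πλ R_M²) / (πλ)` before normalisation by `1 − e^{−πλ R_M²}`.
-/

/-- Lower incomplete gamma function `γ(s,x) = ∫₀^x t^{s−1} e^{−t} dt`. -/
noncomputable def lowerIncGamma (s x : ℝ) : ℝ := ∫ t in (0:ℝ)..x, t ^ (s - 1) * Real.exp (-t)

lemma lowerIncGamma_two (x : ℝ) : lowerIncGamma 2 x = ∫ t in (0:ℝ)..x, t * exp (-t) := by
  norm_num [lowerIncGamma]

lemma mul_rpow_rpow_div_self {ρ r η : ℝ} (hρ : 0 ≤ ρ) (hr : 0 ≤ r) (hη : η ≠ 0) (p : ℝ) :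
    (ρ * r ^ η) ^ (p / η) = ρ ^ (p / η) * r ^ p := by
  rw [mul_rpow hρ (rpow_nonneg hr η), ← rpow_mul hr, mul_div_cancel₀ p hη]

lemma integral_sq_mul_rayleigh_density (c b : ℝ) :
    ∫ r in (0:ℝ)..b, r ^ 2 * (2 * c * r * exp (-(c * r ^ 2))) = lowerIncGamma 2 (c * b ^ 2) / c := by
  rcases eq_or_ne c 0 with rfl | hc
  · simp
  have hsubst : ∫ r in (0:ℝ)..b, (fun t => t * exp (-t)) (c * r ^ 2) * (2 * c * r)
      = ∫ t in (0:ℝ)..c * b ^ 2, t * exp (-t) := by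
    convert intervalIntegral.integral_comp_mul_deriv (a := 0) (b := b)
      (f := fun r => c * r ^ 2) (f' := fun r => 2 * c * r)
      (fun r _ => by simpa [mul_comm, mul_left_comm] using (hasDerivAt_pow 2 r).const_mul c)
      (by fun_prop) (by fun_prop : Continuous fun t : ℝ => t * exp (-t)) using 2 <;> simp
  calc ∫ r in (0:ℝ)..b, r ^ 2 * (2 * c * r * exp (-(c * r ^ 2)))
      = ∫ r in (0:ℝ)..b, c⁻¹ * ((fun t => t * exp (-t)) (c * r ^ 2) * (2 * c * r)) := by
        refine intervalIntegral.integral_congr fun r _ => ?_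
        field_simp
    _ = lowerIncGamma 2 (c * b ^ 2) / c := by
        rw [intervalIntegral.integral_const_mul, hsubst, lowerIncGamma_two, inv_mul_eq_div]

theorem uplink_power_fractional_moment_general
    (l R_M ρ η : ℝ) (hRM : 0 < R_M) (hρ : 0 < ρ) (hη : 2 < η) :
    ∫ r in (0:ℝ)..R_M,
        (ρ * r ^ η) ^ (2 / η) *
          (2 * π * l * r * Real.exp (-(π * l * r ^ 2)) / (1 - Real.exp (-(π * l * R_M ^ 2))))
      = ρ ^ (2 / η) * lowerIncGamma 2 (π * l * R_M ^ 2)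
          / (π * l * (1 - Real.exp (-(π * l * R_M ^ 2)))) := by
  generalize 1 - exp (-(π * l * R_M ^ 2)) = Z
  calc ∫ r in (0:ℝ)..R_M, (ρ * r ^ η) ^ (2 / η) * (2 * π * l * r * exp (-(π * l * r ^ 2)) / Z)
      = ∫ r in (0:ℝ)..R_M,
          ρ ^ (2 / η) / Z * (r ^ 2 * (2 * (π * l) * r * exp (-(π * l * r ^ 2)))) := by
        refine intervalIntegral.integral_congr fun r hr => ?_
        rw [uIcc_of_le hRM.le] at hr
        simp only [mul_rpow_rpow_div_self hρ.le hr.1 (by positivity : η ≠ 0), rpow_two]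
        ring
    _ = ρ ^ (2 / η) * lowerIncGamma 2 (π * l * R_M ^ 2) / (π * l * Z) := by
        rw [intervalIntegral.integral_const_mul, integral_sq_mul_rayleigh_density]
        ring

/-- Fractional moment of the uplink transmit power `P_u = ρ R^η` under
truncated channel inversion power control, where `R` has the truncated
nearest-neighbor density `f_R(r) = 2πλ r e^{−πλr²}/(1 − e^{−πλ R_M²})` on `[0, R_M]`:
`E[P_u^{2/η}] = ρ^{2/η} γ(2, πλ R_M²) / (πλ (1 − e^{−πλ R_M²}))`. -/
theorem uplink_power_fractional_moment
    (l R_M ρ η : ℝ) (hl : 0 < l) (hRM : 0 < R_M) (hρ : 0 < ρ) (hη : 2 < η) :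
    ∫ r in (0:ℝ)..R_M,
        (ρ * r ^ η) ^ (2 / η) *
          (2 * π * l * r * Real.exp (-(π * l * r ^ 2)) / (1 - Real.exp (-(π * l * R_M ^ 2))))
      = ρ ^ (2 / η) * lowerIncGamma 2 (π * l * R_M ^ 2)
          / (π * l * (1 - Real.exp (-(π * l * R_M ^ 2)))) :=
  uplink_power_fractional_moment_general l R_M ρ η hRM hρ hη
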